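/- arXiv:1709.03449 — 8 statements merged into one kernel-verified Lean document; each statement's English description precedes it below -/
import Mathlib

section
/- Let s ≥ 1, N ≥ 1 and z ∈ ℤ^s with gcd(z_j, N) = 1 for all j. For each subset u ⊆ {1,…,s} define ℓ_u(x) = ∏_{j∈u} x_j · ∏_{j∉u} (1 − x_j) and the vertex weight w*_u = 2^{−s} − (1/N) ∑_{k=1}^{N−1} ℓ_u({zk/N}). Then the vertex modified lattice rule Q*(f) = ∑_{a∈{0,1}^s} w*_{supp(a)} f(a) + (1/N) ∑_{k=1}^{N−1} f({zk/N}) integrates all multilinear monomials exactly: for every e ∈ {0,1}^s, ∑_{a∈{0,1}^s} w*_{supp(a)} ∏_{j=1}^s a_j^{e_j} + (1/N) ∑_{k=1}^{N−1} ∏_{j=1}^s {z_j k/N}^{e_j} = ∏_{j=1}^s 1/(e_j + 1) = 2^{−|e|}. -/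
/-!
With `ℓ_a(x) = ∏_{a_j} x_j ∏_{¬a_j} (1 - x_j)`, the identity `∏_j (x_j + (1 - x_j)) = 1`
expands to `∑_a ℓ_a(x) x^e = x^e` whenever every `e_j ≤ 1`: interpolation at the vertices of
the cube reproduces multilinear polynomials. Hence each lattice point `{zk/N}` contributes
to the rule exactly what the vertex corrections `-(1/N) ℓ_a({zk/N})` take away, and the rule
collapses to the equal-weight vertex rule `2^{-s} ∑_a a^e`. This is the interpolation identity
at `x = (1/2, …, 1/2)`, so it equals `2^{-|e|} = ∏_j 1/(e_j + 1)`.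
-/

open Finset

section VertexInterpolation

variable {ι R : Type*} [Fintype ι] [CommRing R]

theorem prod_filter_mul_prod_filter_one_sub (a : ι → Bool) (x : ι → R) :
    (∏ j ∈ univ.filter (fun j => a j = true), x j) *
        ∏ j ∈ univ.filter (fun j => a j = false), (1 - x j) =
      ∏ j, if a j then x j else 1 - x j := by
  simp only [prod_ite, Bool.not_eq_true]

variable [DecidableEq ι]

theorem sum_vertex_lagrange_mul_pow (x : ι → R) (e : ι → ℕ) (he : ∀ j, e j ≤ 1) :
    ∑ a : ι → Bool,
        ((∏ j ∈ univ.filter (fun j => a j = true), x j) *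
          ∏ j ∈ univ.filter (fun j => a j = false), (1 - x j)) *
        ∏ j, (if a j then (1 : R) else 0) ^ e j =
      ∏ j, x j ^ e j := by
  simp only [prod_filter_mul_prod_filter_one_sub, ← prod_mul_distrib]
  calc _ = ∏ j, ∑ b : Bool, (if b then x j else 1 - x j) * (if b then (1 : R) else 0) ^ e j :=
        (Fintype.prod_sum _).symm
    _ = _ := prod_congr rfl fun j _ => ?_
  rcases Nat.le_one_iff_eq_zero_or_eq_one.mp (he j) with h | h <;> simp [h]

theorem sum_sub_sum_vertex_lagrange_mul_pow_add {κ : Type*} (c w : R) (K : Finset κ)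
    (p : κ → ι → R) (e : ι → ℕ) (he : ∀ j, e j ≤ 1) :
    ∑ a : ι → Bool,
        (c - w * ∑ k ∈ K,
            ((∏ j ∈ univ.filter (fun j => a j = true), p k j) *
              ∏ j ∈ univ.filter (fun j => a j = false), (1 - p k j))) *
          ∏ j, (if a j then (1 : R) else 0) ^ e j
      + w * ∑ k ∈ K, ∏ j, p k j ^ e j =
      ∑ a : ι → Bool, c * ∏ j, (if a j then (1 : R) else 0) ^ e j := by
  simp only [sub_mul, sum_sub_distrib, mul_assoc, ← mul_sum]
  simp only [sum_mul]
  rw [sum_comm]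
  simp only [sum_vertex_lagrange_mul_pow _ e he, sub_add_cancel]

end VertexInterpolation

theorem sum_one_div_two_pow_card_mul_pow {ι K : Type*} [Fintype ι] [DecidableEq ι] [Field K] [CharZero K]
    (e : ι → ℕ) (he : ∀ j, e j ≤ 1) :
    ∑ a : ι → Bool, 1 / 2 ^ Fintype.card ι * ∏ j, (if a j then (1 : K) else 0) ^ e j =
      ∏ j, (1 / 2) ^ e j := by
  refine (sum_congr rfl fun a _ => ?_).trans
    (sum_vertex_lagrange_mul_pow (fun _ => (1 / 2 : K)) e he)
  congr 1
  rw [prod_filter_mul_prod_filter_one_sub, ← one_div_pow, ← card_univ, ← prod_const]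
  refine prod_congr rfl fun j _ => ?_
  split_ifs <;> norm_num

theorem one_div_natCast_add_one_eq_half_pow {K : Type*} [DivisionRing K] {n : ℕ} (hn : n ≤ 1) :
    (1 : K) / ((n : K) + 1) = (1 / 2) ^ n := by
  interval_cases n <;> norm_num

theorem stmt0_general (s N : ℕ) (z : Fin s → ℤ)
    (e : Fin s → ℕ) (he : ∀ j, e j ≤ 1) :
    ((∑ a : Fin s → Bool,
        ((1 / 2 ^ s
            - (1 / (N : ℝ)) * ∑ k ∈ Finset.Icc 1 (N - 1),
                ((∏ j ∈ Finset.univ.filter (fun j => a j = true),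
                    Int.fract ((z j : ℝ) * k / N)) *
                  ∏ j ∈ Finset.univ.filter (fun j => a j = false),
                    (1 - Int.fract ((z j : ℝ) * k / N)))) *
          ∏ j, (if a j then (1 : ℝ) else 0) ^ e j))
      + (1 / (N : ℝ)) * ∑ k ∈ Finset.Icc 1 (N - 1),
          ∏ j, Int.fract ((z j : ℝ) * k / N) ^ e j
      = ∏ j, (1 : ℝ) / ((e j : ℝ) + 1)) ∧
    (∏ j, (1 : ℝ) / ((e j : ℝ) + 1)) = 1 / 2 ^ (∑ j, e j) := by
  have hcoord : ∀ j, (1 : ℝ) / ((e j : ℝ) + 1) = (1 / 2) ^ e j :=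
    fun j => one_div_natCast_add_one_eq_half_pow (he j)
  simp only [hcoord]
  refine ⟨?_, by rw [prod_pow_eq_pow_sum, one_div_pow]⟩
  rw [sum_sub_sum_vertex_lagrange_mul_pow_add _ _ _
    (fun (k : ℕ) j => Int.fract ((z j : ℝ) * k / N)) e he]
  simpa using sum_one_div_two_pow_card_mul_pow (K := ℝ) e he

/-- Let `s ≥ 1`, `N ≥ 1` and `z ∈ ℤ^s` with `gcd(z_j, N) = 1` for all `j`.
With the vertex weights `w*_u = 2^{−s} − (1/N) ∑_{k=1}^{N−1} ℓ_u({zk/N})`, where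
`ℓ_u(x) = ∏_{j∈u} x_j ∏_{j∉u}(1−x_j)`, the optimal vertex modified lattice rule integrates
all multilinear monomials exactly: for every `e ∈ {0,1}^s`,
`∑_{a∈{0,1}^s} w*_{supp(a)} ∏_j a_j^{e_j} + (1/N) ∑_{k=1}^{N−1} ∏_j {z_j k/N}^{e_j}
  = ∏_j 1/(e_j+1) = 2^{−|e|}`. -/
theorem stmt0 (s N : ℕ) (hs : 1 ≤ s) (hN : 1 ≤ N) (z : Fin s → ℤ)
    (hz : ∀ j, Int.gcd (z j) N = 1)
    (e : Fin s → ℕ) (he : ∀ j, e j ≤ 1) :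
    ((∑ a : Fin s → Bool,
        ((1 / 2 ^ s
            - (1 / (N : ℝ)) * ∑ k ∈ Finset.Icc 1 (N - 1),
                ((∏ j ∈ Finset.univ.filter (fun j => a j = true),
                    Int.fract ((z j : ℝ) * k / N)) *
                  ∏ j ∈ Finset.univ.filter (fun j => a j = false),
                    (1 - Int.fract ((z j : ℝ) * k / N)))) *
          ∏ j, (if a j then (1 : ℝ) else 0) ^ e j))
      + (1 / (N : ℝ)) * ∑ k ∈ Finset.Icc 1 (N - 1),
          ∏ j, Int.fract ((z j : ℝ) * k / N) ^ e j
      = ∏ j, (1 : ℝ) / ((e j : ℝ) + 1)) ∧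
    (∏ j, (1 : ℝ) / ((e j : ℝ) + 1)) = 1 / 2 ^ (∑ j, e j) :=
  stmt0_general s N z e he
end

section
/- Let s ≥ 1, N ≥ 2, z ∈ ℤ^s with gcd(z_j, N) = 1 for all j, and let γ_1,…,γ_s > 0. Let w : {0,1}^s → ℝ be any assignment of vertex weights with ∑_{a∈{0,1}^s} w(a) = 1/N. Consider the vertex modified rule whose nodes are the 2^s vertices a ∈ {0,1}^s with weights w(a) together with the interior lattice points {zk/N}, k = 1,…,N−1, each with weight 1/N. Then the kernel quadratic form of this rule for the Korobov kernel K(x,y) = ∏_{j=1}^s (1 + 2π²γ_j B₂({x_j − y_j})) equals that of the unmodified lattice rule: ∑_{p,q} w_p w_q K(x_p, x_q) = (1/N²) ∑_{k,ℓ=0}^{N−1} K({zk/N}, {zℓ/N}), where the left-hand sum ranges over all pairs of nodes of the modified rule. -/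
/-!
The Korobov kernel depends on its arguments only through the fractional parts of their
coordinate differences, so every vertex of the unit cube acts in the kernel exactly as the
origin, which is the lattice point for `k = 0`. Since the vertex weights add up to `1/N`,
the vertices together contribute to the quadratic form exactly what the node `0` with weight
`1/N` contributes to the unmodified lattice rule.
-/

open Finset Real

theorem Int.fract_sub_eq_fract_neg_of_fract_eq_zero {R : Type*} [Ring R] [LinearOrder R]
    [FloorRing R] [IsStrictOrderedRing R] {x : R} (hx : Int.fract x = 0) (y : R) :
    Int.fract (x - y) = Int.fract (-y) := by
  obtain ⟨m, rfl⟩ := Int.fract_eq_zero_iff.mp hx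
  rw [sub_eq_neg_add, Int.fract_add_intCast]

theorem Int.fract_sub_eq_fract_of_fract_eq_zero {R : Type*} [Ring R] [LinearOrder R]
    [FloorRing R] [IsStrictOrderedRing R] {x : R} (hx : Int.fract x = 0) (y : R) :
    Int.fract (y - x) = Int.fract y := by
  obtain ⟨m, rfl⟩ := Int.fract_eq_zero_iff.mp hx
  exact Int.fract_sub_intCast y m

theorem Int.fract_ite_one_zero (b : Bool) : Int.fract (if b then (1 : ℝ) else 0) = 0 := by
  cases b <;> simp

section ProductKernel

variable {ι : Type*} [Fintype ι] (g : ι → ℝ → ℝ) {x : ι → ℝ}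

theorem prod_fract_sub_left_eq_of_fract_eq_zero (hx : ∀ j, Int.fract (x j) = 0) (y : ι → ℝ) :
    ∏ j, g j (Int.fract (x j - y j)) = ∏ j, g j (Int.fract ((0 : ι → ℝ) j - y j)) := by
  simp only [Pi.zero_apply, zero_sub, Int.fract_sub_eq_fract_neg_of_fract_eq_zero (hx _)]

theorem prod_fract_sub_right_eq_of_fract_eq_zero (hx : ∀ j, Int.fract (x j) = 0) (y : ι → ℝ) :
    ∏ j, g j (Int.fract (y j - x j)) = ∏ j, g j (Int.fract (y j - (0 : ι → ℝ) j)) := by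
  simp only [Pi.zero_apply, sub_zero, Int.fract_sub_eq_fract_of_fract_eq_zero (hx _)]

end ProductKernel

/-- Nodes `v a` that the kernel cannot tell apart from `x₀` can be merged into the single node
`x₀` carrying their total weight `u`. -/
theorem quadForm_merge_nodes {X ι κ : Type*} [Fintype ι] (K : X → X → ℝ) (x₀ : X) (v : ι → X)
    (hl : ∀ a y, K (v a) y = K x₀ y) (hr : ∀ a y, K y (v a) = K y x₀)
    (w : ι → ℝ) (u : ℝ) (hw : ∑ a, w a = u) (S : Finset κ) (Q : κ → X) :
    (∑ a, ∑ b, w a * w b * K (v a) (v b)) + (∑ a, ∑ k ∈ S, w a * u * K (v a) (Q k))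
      + (∑ k ∈ S, ∑ a, u * w a * K (Q k) (v a)) + (∑ k ∈ S, ∑ l ∈ S, u * u * K (Q k) (Q l))
      = u * u * (K x₀ x₀ + ∑ l ∈ S, K x₀ (Q l) + ∑ k ∈ S, K (Q k) x₀
          + ∑ k ∈ S, ∑ l ∈ S, K (Q k) (Q l)) := by
  simp only [hl, hr, ← sum_mul, ← mul_sum, hw]
  ring

theorem sum_range_eq_add_sum_Icc {M : Type*} [AddCommMonoid M] {N : ℕ} (hN : 0 < N)
    (f : ℕ → M) : ∑ k ∈ range N, f k = f 0 + ∑ k ∈ Icc 1 (N - 1), f k := by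
  rw [range_eq_Ico, sum_eq_sum_Ico_succ_bot hN, ← Ico_add_one_right_eq_Icc,
    Nat.sub_one_add_one_eq_of_pos hN, zero_add]

theorem sum_range_sum_range_eq {M : Type*} [AddCommMonoid M] {N : ℕ} (hN : 0 < N)
    (f : ℕ → ℕ → M) :
    ∑ k ∈ range N, ∑ l ∈ range N, f k l
      = f 0 0 + ∑ l ∈ Icc 1 (N - 1), f 0 l + ∑ k ∈ Icc 1 (N - 1), f k 0
          + ∑ k ∈ Icc 1 (N - 1), ∑ l ∈ Icc 1 (N - 1), f k l := by
  simp only [sum_range_eq_add_sum_Icc hN, sum_add_distrib]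
  abel

theorem stmt1_general (s N : ℕ) (hN : 2 ≤ N) (z : Fin s → ℤ)
    (γ : Fin s → ℝ)
    (w : (Fin s → Bool) → ℝ) (hw : ∑ a : Fin s → Bool, w a = 1 / N) :
    let B2 : ℝ → ℝ := fun t => t ^ 2 - t + 1 / 6
    let K : (Fin s → ℝ) → (Fin s → ℝ) → ℝ := fun x y =>
      ∏ j, (1 + 2 * π ^ 2 * γ j * B2 (Int.fract (x j - y j)))
    let v : (Fin s → Bool) → Fin s → ℝ := fun a j => if a j then 1 else 0
    let P : ℕ → Fin s → ℝ := fun k j => Int.fract ((z j : ℝ) * k / N)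
    (∑ a : Fin s → Bool, ∑ b : Fin s → Bool, w a * w b * K (v a) (v b))
      + (∑ a : Fin s → Bool, ∑ k ∈ Finset.Icc 1 (N - 1), w a * (1 / (N : ℝ)) * K (v a) (P k))
      + (∑ k ∈ Finset.Icc 1 (N - 1), ∑ a : Fin s → Bool, (1 / (N : ℝ)) * w a * K (P k) (v a))
      + (∑ k ∈ Finset.Icc 1 (N - 1), ∑ l ∈ Finset.Icc 1 (N - 1),
          (1 / (N : ℝ)) * (1 / (N : ℝ)) * K (P k) (P l))
      = (1 / (N : ℝ) ^ 2) * ∑ k ∈ Finset.range N, ∑ l ∈ Finset.range N, K (P k) (P l) := by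
  intro B2 K v P
  let g : Fin s → ℝ → ℝ := fun j t => 1 + 2 * π ^ 2 * γ j * B2 t
  have hP0 : P 0 = 0 := by
    funext j
    simp [P]
  have hv (a) : ∀ j, Int.fract (v a j) = 0 := fun j => Int.fract_ite_one_zero (a j)
  have hl (a) (y) : K (v a) y = K (P 0) y := by
    rw [hP0]
    exact prod_fract_sub_left_eq_of_fract_eq_zero g (hv a) y
  have hr (a) (y) : K y (v a) = K y (P 0) := by
    rw [hP0]
    exact prod_fract_sub_right_eq_of_fract_eq_zero g (hv a) y
  rw [quadForm_merge_nodes K (P 0) v hl hr w _ hw, sum_range_sum_range_eq (by omega)]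
  ring

/-- Let `s ≥ 1`, `N ≥ 2`, `z ∈ ℤ^s` with `gcd(z_j,N) = 1`, `γ_j > 0`, and let
`w : {0,1}^s → ℝ` be vertex weights with `∑_a w(a) = 1/N`. For the Korobov kernel
`K(x,y) = ∏_j (1 + 2π²γ_j B₂({x_j − y_j}))`, the kernel quadratic form of the vertex
modified rule (vertices `a` with weights `w(a)` together with the interior lattice points
`{zk/N}`, `k = 1,…,N−1`, each with weight `1/N`) equals that of the unmodified lattice
rule `(1/N²) ∑_{k,ℓ=0}^{N−1} K({zk/N}, {zℓ/N})`. -/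
theorem stmt1 (s N : ℕ) (hs : 1 ≤ s) (hN : 2 ≤ N) (z : Fin s → ℤ)
    (hz : ∀ j, Int.gcd (z j) N = 1)
    (γ : Fin s → ℝ) (hγ : ∀ j, 0 < γ j)
    (w : (Fin s → Bool) → ℝ) (hw : ∑ a : Fin s → Bool, w a = 1 / N) :
    let B2 : ℝ → ℝ := fun t => t ^ 2 - t + 1 / 6
    let K : (Fin s → ℝ) → (Fin s → ℝ) → ℝ := fun x y =>
      ∏ j, (1 + 2 * π ^ 2 * γ j * B2 (Int.fract (x j - y j)))
    let v : (Fin s → Bool) → Fin s → ℝ := fun a j => if a j then 1 else 0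
    let P : ℕ → Fin s → ℝ := fun k j => Int.fract ((z j : ℝ) * k / N)
    (∑ a : Fin s → Bool, ∑ b : Fin s → Bool, w a * w b * K (v a) (v b))
      + (∑ a : Fin s → Bool, ∑ k ∈ Finset.Icc 1 (N - 1), w a * (1 / (N : ℝ)) * K (v a) (P k))
      + (∑ k ∈ Finset.Icc 1 (N - 1), ∑ a : Fin s → Bool, (1 / (N : ℝ)) * w a * K (P k) (v a))
      + (∑ k ∈ Finset.Icc 1 (N - 1), ∑ l ∈ Finset.Icc 1 (N - 1),
          (1 / (N : ℝ)) * (1 / (N : ℝ)) * K (P k) (P l))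
      = (1 / (N : ℝ) ^ 2) * ∑ k ∈ Finset.range N, ∑ l ∈ Finset.range N, K (P k) (P l) :=
  stmt1_general s N hN z γ w hw
end

section
/- Let s ≥ 1, γ_1,…,γ_s > 0, let x_1,…,x_M ∈ [0,1]^s and let w_1,…,w_M ∈ ℝ with ∑_{k=1}^M w_k = 1. Then the following identity holds: ∑_{k,ℓ=1}^M w_k w_ℓ ∏_{j=1}^s (1 + γ_j B₁(x_{k,j}) B₁(x_{ℓ,j}) + γ_j B₂({x_{k,j} − x_{ℓ,j}})/2) − 1 = [∑_{k,ℓ=1}^M w_k w_ℓ ∏_{j=1}^s (1 + γ_j B₁(x_{k,j}) B₁(x_{ℓ,j})) − 1] + [∑_{k,ℓ=1}^M w_k w_ℓ ∏_{j=1}^s (1 + γ_j B₂({x_{k,j} − x_{ℓ,j}})/2) − 1] + ∑_{k,ℓ=1}^M w_k w_ℓ ∑_{∅≠u⊆{1,…,s}} ∑_{∅≠v⊊u} ∏_{j∈u∖v} γ_j B₁(x_{k,j}) B₁(x_{ℓ,j}) ∏_{j'∈v} γ_{j'} B₂({x_{k,j'} − x_{ℓ,j'}})/2. (The left side is the squared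 worst-case error of the rule in the unanchored Sobolev space of smoothness 1 with weights γ; the first bracket is the squared worst-case error in the multilinear space with weights γ/12, the second bracket that in the Korobov space of smoothness 1 with weights γ/(2π)², and the last term is the mixture term.) -/
/-!
Pointwise in `(k, l)` the identity is purely algebraic: expanding `∏ⱼ (1 + aⱼ + bⱼ)` gives
`∑_{v ⊆ u ⊆ [s]} ∏_{u \ v} a · ∏_v b`. The terms with `v = ∅` sum to `∏ⱼ (1 + aⱼ)`, those with
`v = u ≠ ∅` to `∏ⱼ (1 + bⱼ) - 1`, and the rest form the mixture term. Summing against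
`w_k w_l` and using `∑_{k,l} w_k w_l = (∑_k w_k)² = 1` distributes the constant `-1`.
-/

open Finset

namespace Finset

variable {ι : Type*} [DecidableEq ι]

theorem sum_powerset_eq_add_add_sum_filter {M : Type*} [AddCommMonoid M] {u : Finset ι}
    (hu : u ≠ ∅) (f : Finset ι → M) :
    ∑ v ∈ u.powerset, f v
      = f ∅ + f u + ∑ v ∈ u.powerset.filter (fun v => v ≠ ∅ ∧ v ≠ u), f v := by
  rw [← add_sum_erase _ f (empty_mem_powerset u),
    ← add_sum_erase _ f (mem_erase.mpr ⟨hu, mem_powerset_self u⟩), add_assoc]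
  congr 3
  ext v
  simp only [mem_erase, mem_filter]
  tauto

section CommSemiring

variable {R : Type*} [CommSemiring R]

theorem prod_one_add_eq_one_add_sum_filter_ne_empty (s : Finset ι) (c : ι → R) :
    ∏ j ∈ s, (1 + c j) = 1 + ∑ u ∈ s.powerset.filter (fun u => u ≠ ∅), ∏ j ∈ u, c j := by
  rw [prod_one_add, filter_ne', ← add_sum_erase _ _ (empty_mem_powerset s), prod_empty]

theorem prod_one_add_add_eq_sum_powerset_powerset (s : Finset ι) (a b : ι → R) :
    ∏ j ∈ s, (1 + a j + b j)
      = ∑ u ∈ s.powerset, ∑ v ∈ u.powerset, (∏ j ∈ u \ v, a j) * ∏ j ∈ v, b j := by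
  simp only [add_assoc, prod_one_add, add_comm (a _), prod_add]
  exact sum_congr rfl fun u _ => sum_congr rfl fun v _ => mul_comm _ _

end CommSemiring

theorem prod_one_add_add {R : Type*} [CommRing R] (s : Finset ι) (a b : ι → R) :
    ∏ j ∈ s, (1 + a j + b j)
      = ∏ j ∈ s, (1 + a j) + ∏ j ∈ s, (1 + b j) - 1
        + ∑ u ∈ s.powerset.filter (fun u => u ≠ ∅),
            ∑ v ∈ u.powerset.filter (fun v => v ≠ ∅ ∧ v ≠ u),
              (∏ j ∈ u \ v, a j) * ∏ j ∈ v, b j := by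
  have hsplit : ∀ u ∈ s.powerset.filter (fun u => u ≠ ∅),
      ∑ v ∈ u.powerset, (∏ j ∈ u \ v, a j) * ∏ j ∈ v, b j
        = ∏ j ∈ u, a j + ∏ j ∈ u, b j
          + ∑ v ∈ u.powerset.filter (fun v => v ≠ ∅ ∧ v ≠ u),
              (∏ j ∈ u \ v, a j) * ∏ j ∈ v, b j := fun u hu => by
    rw [sum_powerset_eq_add_add_sum_filter (mem_filter.mp hu).2]
    simp
  rw [prod_one_add_add_eq_sum_powerset_powerset, ← add_sum_erase _ _ (empty_mem_powerset s),
    ← filter_ne', sum_congr rfl hsplit,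
    prod_one_add_eq_one_add_sum_filter_ne_empty, prod_one_add_eq_one_add_sum_filter_ne_empty,
    sum_add_distrib, sum_add_distrib]
  simp only [powerset_empty, empty_sdiff, prod_empty, one_mul, sum_singleton, ne_eq]
  ring

end Finset

theorem stmt2_general (s M : ℕ) (γ : Fin s → ℝ)
    (x : Fin M → Fin s → ℝ)
    (w : Fin M → ℝ) (hw : ∑ k, w k = 1) :
    let B1 : ℝ → ℝ := fun t => t - 1 / 2
    let B2 : ℝ → ℝ := fun t => t ^ 2 - t + 1 / 6
    (∑ k, ∑ l, w k * w l *
        ∏ j, (1 + γ j * B1 (x k j) * B1 (x l j)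
                + γ j * B2 (Int.fract (x k j - x l j)) / 2)) - 1
      = ((∑ k, ∑ l, w k * w l * ∏ j, (1 + γ j * B1 (x k j) * B1 (x l j))) - 1)
        + ((∑ k, ∑ l, w k * w l *
              ∏ j, (1 + γ j * B2 (Int.fract (x k j - x l j)) / 2)) - 1)
        + ∑ k, ∑ l, w k * w l *
            ∑ u ∈ Finset.univ.powerset.filter (fun u : Finset (Fin s) => u ≠ ∅),
              ∑ v ∈ u.powerset.filter (fun v => v ≠ ∅ ∧ v ≠ u),
                (∏ j ∈ u \ v, γ j * B1 (x k j) * B1 (x l j)) *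
                  ∏ j ∈ v, γ j * B2 (Int.fract (x k j - x l j)) / 2 := by
  intro B1 B2
  have hww : ∑ k, ∑ l, w k * w l = 1 := by
    rw [← sum_mul_sum, hw, one_mul]
  simp only [prod_one_add_add, mul_add, mul_sub, mul_one, sum_add_distrib, sum_sub_distrib, hww]
  ring

/-- decomposition of the squared worst-case error in the unanchored Sobolev
space of smoothness 1 into the multilinear part, the Korobov part, and the mixture term,
for any cubature rule with nodes `x_k ∈ [0,1]^s` and weights `w_k` summing to `1`. -/
theorem stmt2 (s M : ℕ) (hs : 1 ≤ s) (γ : Fin s → ℝ) (hγ : ∀ j, 0 < γ j)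
    (x : Fin M → Fin s → ℝ) (hx : ∀ k j, x k j ∈ Set.Icc (0 : ℝ) 1)
    (w : Fin M → ℝ) (hw : ∑ k, w k = 1) :
    let B1 : ℝ → ℝ := fun t => t - 1 / 2
    let B2 : ℝ → ℝ := fun t => t ^ 2 - t + 1 / 6
    (∑ k, ∑ l, w k * w l *
        ∏ j, (1 + γ j * B1 (x k j) * B1 (x l j)
                + γ j * B2 (Int.fract (x k j - x l j)) / 2)) - 1
      = ((∑ k, ∑ l, w k * w l * ∏ j, (1 + γ j * B1 (x k j) * B1 (x l j))) - 1)
        + ((∑ k, ∑ l, w k * w l *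
              ∏ j, (1 + γ j * B2 (Int.fract (x k j - x l j)) / 2)) - 1)
        + ∑ k, ∑ l, w k * w l *
            ∑ u ∈ Finset.univ.powerset.filter (fun u : Finset (Fin s) => u ≠ ∅),
              ∑ v ∈ u.powerset.filter (fun v => v ≠ ∅ ∧ v ≠ u),
                (∏ j ∈ u \ v, γ j * B1 (x k j) * B1 (x l j)) *
                  ∏ j ∈ v, γ j * B2 (Int.fract (x k j - x l j)) / 2 :=
  stmt2_general s M γ x w hw
end

section
/- Let N ≥ 1 and γ > 0. Consider the one-dimensional trapezoidal rule with nodes x_k = k/N for k = 0,1,…,N, and weights w_0 = w_N = 1/(2N) and w_k = 1/N for 1 ≤ k ≤ N−1. Then its squared worst-case error in the unanchored Sobolev space of smoothness 1 satisfies ∑_{k,ℓ=0}^N w_k w_ℓ (1 + γ B₁(x_k) B₁(x_ℓ) + γ B₂({x_k − x_ℓ})/2) − 1 = γ/(12 N²); equivalently, the worst-case error equals √(γ/12) · 1/N. -/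
/-!
The trapezoidal weights sum to `1` and are symmetric under `k ↦ N - k`, while `B₁` is odd about
`1/2`; so the `B₁ B₁` part of the kernel contributes nothing. The `B₂` part depends on `x_k - x_ℓ`
only modulo `1`, and once the endpoints `0` and `1` are identified the weights are uniformly
`1/N`; hence every row `∑_ℓ w_ℓ B₂({x_k - x_ℓ})` is the Riemann sum `(1/N) ∑_{r<N} B₂(r/N)`,
which equals `1/(6N²)`. The double sum is therefore `1 + γ/(12N²)`.
-/

open Finset

noncomputable def trapezoidWeight (N k : ℕ) : ℝ :=
  if k = 0 ∨ k = N then 1 / (2 * N) else 1 / N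

theorem Function.Periodic.sum_range_add {M : Type*} [AddCommMonoid M] {f : ℕ → M} {n : ℕ}
    (hf : Function.Periodic f n) (m : ℕ) : ∑ j ∈ range n, f (m + j) = ∑ j ∈ range n, f j := by
  induction m with
  | zero => simp
  | succ m ih =>
    rw [← ih]
    cases n with
    | zero => simp
    | succ n =>
      rw [sum_range_succ, sum_range_succ', add_zero, ← hf m]
      simp only [add_assoc, add_comm 1]

theorem trapezoidWeight_reflect {N k : ℕ} (hk : k ≤ N) :
    trapezoidWeight N (N - k) = trapezoidWeight N k := by
  unfold trapezoidWeight
  congr 1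
  apply propext
  omega

theorem sum_trapezoidWeight_mul_of_eq {N : ℕ} (hN : N ≠ 0) {f : ℕ → ℝ} (hf : f N = f 0) :
    ∑ k ∈ range (N + 1), trapezoidWeight N k * f k = (∑ k ∈ range N, f k) / N := by
  obtain ⟨M, rfl⟩ := Nat.exists_eq_succ_of_ne_zero hN
  have hinterior : ∀ k ∈ range M,
      trapezoidWeight (M + 1) (k + 1) * f (k + 1) = f (k + 1) / (M + 1 : ℕ) := by
    intro k hk
    have : ¬(k + 1 = 0 ∨ k + 1 = M + 1) := by simp at hk; omega
    rw [trapezoidWeight, if_neg this, one_div_mul_eq_div]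
  rw [sum_range_succ, sum_range_succ', sum_congr rfl hinterior, sum_range_succ', hf, ← sum_div]
  simp only [trapezoidWeight, true_or, or_true, if_true]
  push_cast
  field_simp
  ring

theorem sum_trapezoidWeight {N : ℕ} (hN : N ≠ 0) :
    ∑ k ∈ range (N + 1), trapezoidWeight N k = 1 := by
  simpa [hN] using sum_trapezoidWeight_mul_of_eq hN (f := fun _ => 1) rfl

theorem sum_trapezoidWeight_mul_sub_half {N : ℕ} (hN : N ≠ 0) :
    ∑ k ∈ range (N + 1), trapezoidWeight N k * ((k : ℝ) / N - 1 / 2) = 0 := by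
  set S := ∑ k ∈ range (N + 1), trapezoidWeight N k * ((k : ℝ) / N - 1 / 2)
  have hreflect : S = -S := calc
    S = ∑ k ∈ range (N + 1), trapezoidWeight N (N - k) * (((N - k : ℕ) : ℝ) / N - 1 / 2) :=
        (sum_range_reflect _ _).symm
    _ = ∑ k ∈ range (N + 1), -(trapezoidWeight N k * ((k : ℝ) / N - 1 / 2)) := by
        refine sum_congr rfl fun k hk => ?_
        have hkN : k ≤ N := Nat.lt_succ_iff.mp (mem_range.mp hk)
        rw [trapezoidWeight_reflect hkN, Nat.cast_sub hkN]
        field_simp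
        ring
    _ = -S := sum_neg_distrib _
  linarith

theorem sum_range_comp_fract_sub {M : Type*} [AddCommMonoid M] {N : ℕ} (hN : N ≠ 0)
    (g : ℝ → M) (k : ℕ) :
    ∑ l ∈ range N, g (Int.fract ((k : ℝ) / N - l / N)) = ∑ r ∈ range N, g (r / N) := by
  have hN' : (N : ℝ) ≠ 0 := Nat.cast_ne_zero.mpr hN
  have hper : Function.Periodic (fun m : ℕ => g (Int.fract ((m : ℝ) / N))) N := by
    intro m
    simp only [Nat.cast_add, add_div, div_self hN', Int.fract_add_one]
  -- reflecting `l ↦ N - 1 - l` leaves a sum over `N` consecutive values of an `N`-periodic function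
  calc ∑ l ∈ range N, g (Int.fract ((k : ℝ) / N - l / N))
      = ∑ l ∈ range N, g (Int.fract ((k : ℝ) / N - ↑(N - 1 - l) / N)) :=
        (sum_range_reflect _ _).symm
    _ = ∑ l ∈ range N, g (Int.fract (((k + 1 + l : ℕ) : ℝ) / N)) := by
        refine sum_congr rfl fun l hl => ?_
        have hlN : l < N := mem_range.mp hl
        have : (k : ℝ) / N - ↑(N - 1 - l) / N = ((k + 1 + l : ℕ) : ℝ) / N + ((-1 : ℤ) : ℝ) := by
          rw [Nat.cast_sub (by omega), Nat.cast_sub (by omega)]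
          push_cast
          field_simp
          ring
        rw [this, Int.fract_add_intCast]
    _ = ∑ r ∈ range N, g (r / N) := by
        rw [hper.sum_range_add (k + 1)]
        refine sum_congr rfl fun r hr => ?_
        rw [Int.fract_eq_self.mpr ⟨by positivity,
          (div_lt_one (by positivity)).mpr (by exact_mod_cast mem_range.mp hr)⟩]

theorem sum_range_div_sq_sub_div_add_sixth (N n : ℕ) :
    ∑ r ∈ range n, (((r : ℝ) / N) ^ 2 - r / N + 1 / 6)
      = (n : ℝ) * (n - 1) * (2 * n - 1) / (6 * N ^ 2) - n * (n - 1) / (2 * N) + n / 6 := by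
  induction n with
  | zero => simp
  | succ n ih => rw [sum_range_succ, ih]; push_cast; ring

theorem sum_range_div_sq_sub_div_add_sixth_self {N : ℕ} (hN : N ≠ 0) :
    ∑ r ∈ range N, (((r : ℝ) / N) ^ 2 - r / N + 1 / 6) = 1 / (6 * (N : ℝ)) := by
  rw [sum_range_div_sq_sub_div_add_sixth]
  field_simp
  ring

theorem sum_trapezoidWeight_mul_comp_fract_sub {N : ℕ} (hN : N ≠ 0) (g : ℝ → ℝ) (k : ℕ) :
    ∑ l ∈ range (N + 1), trapezoidWeight N l * g (Int.fract ((k : ℝ) / N - l / N))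
      = (∑ r ∈ range N, g (r / N)) / N := by
  rw [sum_trapezoidWeight_mul_of_eq hN, sum_range_comp_fract_sub hN]
  simp only [Nat.cast_zero, zero_div, sub_zero, div_self (Nat.cast_ne_zero.mpr hN : (N : ℝ) ≠ 0),
    Int.fract_sub_one]

theorem sum_sum_mul_mul_kernel {ι : Type*} (s : Finset ι) (w a : ι → ℝ) (b : ι → ι → ℝ)
    (γ : ℝ) :
    ∑ k ∈ s, ∑ l ∈ s, w k * w l * (1 + γ * a k * a l + γ * b k l / 2)
      = (∑ k ∈ s, w k) ^ 2 + γ * (∑ k ∈ s, w k * a k) ^ 2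
        + γ / 2 * ∑ k ∈ s, w k * ∑ l ∈ s, w l * b k l := by
  simp only [sq, sum_mul_sum]
  simp only [mul_sum, ← sum_add_distrib]
  refine sum_congr rfl fun k _ => sum_congr rfl fun l _ => ?_
  ring

theorem stmt3_general (N : ℕ) (hN : 1 ≤ N) (γ : ℝ) :
    let B1 : ℝ → ℝ := fun t => t - 1 / 2
    let B2 : ℝ → ℝ := fun t => t ^ 2 - t + 1 / 6
    let w : ℕ → ℝ := fun k => if k = 0 ∨ k = N then 1 / (2 * N) else 1 / N
    ((∑ k ∈ Finset.range (N + 1), ∑ l ∈ Finset.range (N + 1),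
        w k * w l * (1 + γ * B1 ((k : ℝ) / N) * B1 ((l : ℝ) / N)
          + γ * B2 (Int.fract ((k : ℝ) / N - (l : ℝ) / N)) / 2)) - 1
      = γ / (12 * (N : ℝ) ^ 2)) ∧
    Real.sqrt ((∑ k ∈ Finset.range (N + 1), ∑ l ∈ Finset.range (N + 1),
        w k * w l * (1 + γ * B1 ((k : ℝ) / N) * B1 ((l : ℝ) / N)
          + γ * B2 (Int.fract ((k : ℝ) / N - (l : ℝ) / N)) / 2)) - 1)
      = Real.sqrt (γ / 12) * (1 / N) := by
  intro B1 B2 w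
  have hN0 : N ≠ 0 := Nat.one_le_iff_ne_zero.mp hN
  have hw : w = trapezoidWeight N := rfl
  have hweights : ∑ k ∈ range (N + 1), w k = 1 := sum_trapezoidWeight hN0
  have hB1 : ∑ k ∈ range (N + 1), w k * B1 (k / N) = 0 := sum_trapezoidWeight_mul_sub_half hN0
  have hB2 : ∑ r ∈ range N, B2 (r / N) = 1 / (6 * N) :=
    sum_range_div_sq_sub_div_add_sixth_self hN0
  have hrow (k : ℕ) : ∑ l ∈ range (N + 1), w l * B2 (Int.fract ((k : ℝ) / N - l / N))
      = 1 / (6 * N ^ 2) := by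
    rw [hw, sum_trapezoidWeight_mul_comp_fract_sub hN0 B2 k, hB2]
    field_simp
  have hsum : ∑ k ∈ range (N + 1), ∑ l ∈ range (N + 1),
        w k * w l * (1 + γ * B1 ((k : ℝ) / N) * B1 ((l : ℝ) / N)
          + γ * B2 (Int.fract ((k : ℝ) / N - (l : ℝ) / N)) / 2) - 1 = γ / (12 * N ^ 2) := by
    rw [sum_sum_mul_mul_kernel, hweights, hB1]
    simp only [hrow, ← sum_mul, hweights]
    ring
  refine ⟨hsum, ?_⟩
  rw [hsum, show γ / (12 * (N : ℝ) ^ 2) = γ / 12 * (1 / N) ^ 2 by ring,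
    Real.sqrt_mul' _ (sq_nonneg _), Real.sqrt_sq (by positivity)]

/-- Let `N ≥ 1` and `γ > 0`. The one-dimensional trapezoidal rule with nodes
`k/N`, `k = 0,…,N`, weights `1/(2N)` at the endpoints and `1/N` elsewhere, has squared
worst-case error `γ/(12N²)` in the unanchored Sobolev space of smoothness 1; equivalently,
worst-case error `√(γ/12)·(1/N)`. -/
theorem stmt3 (N : ℕ) (hN : 1 ≤ N) (γ : ℝ) (hγ : 0 < γ) :
    let B1 : ℝ → ℝ := fun t => t - 1 / 2
    let B2 : ℝ → ℝ := fun t => t ^ 2 - t + 1 / 6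
    let w : ℕ → ℝ := fun k => if k = 0 ∨ k = N then 1 / (2 * N) else 1 / N
    ((∑ k ∈ Finset.range (N + 1), ∑ l ∈ Finset.range (N + 1),
        w k * w l * (1 + γ * B1 ((k : ℝ) / N) * B1 ((l : ℝ) / N)
          + γ * B2 (Int.fract ((k : ℝ) / N - (l : ℝ) / N)) / 2)) - 1
      = γ / (12 * (N : ℝ) ^ 2)) ∧
    Real.sqrt ((∑ k ∈ Finset.range (N + 1), ∑ l ∈ Finset.range (N + 1),
        w k * w l * (1 + γ * B1 ((k : ℝ) / N) * B1 ((l : ℝ) / N)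
          + γ * B2 (Int.fract ((k : ℝ) / N - (l : ℝ) / N)) / 2)) - 1)
      = Real.sqrt (γ / 12) * (1 / N) :=
  stmt3_general N hN γ
end

section
/- Let N ≥ 3 and let z₁, z₂ ∈ ℤ with gcd(z₁, N) = gcd(z₂, N) = 1, and let w ∈ {1,…,N−1} satisfy w z₁ ≡ z₂ (mod N). Then ∑_{k,ℓ=1}^{N−1} B₁({z₁ k/N}) B₁({z₁ ℓ/N}) B₂({z₂(k−ℓ)/N}) = (1/(4π²)) ∑_{h ≥ 1, N ∤ h} cot²(π h w/N)/h², where the right-hand sum ranges over all positive integers h not divisible by N (and this series converges). -/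
/-!
Expanding `B₂({x}) = π⁻² ∑_{n ≥ 1} cos (2πnx) / n²` turns the double sum into
`π⁻² ∑_n n⁻² |S_n|²` with `S_n = ∑_k B₁({z₁k/N}) e^{2πi n z₂ k / N}`. Substituting `m ≡ z₁k (mod N)`
and using `z₂ ≡ w z₁`, `S_n = ∑_{m=1}^{N-1} (m/N - 1/2) ω^m` with `ω = e^{2πi n w / N}`, an
`N`-th root of unity. This differentiated geometric sum vanishes for `ω = 1`, i.e. `N ∣ n`, and
otherwise equals `(ω + 1) / (2 (ω - 1)) = -(i/2) cot (π n w / N)`.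
-/

open Real Finset

theorem sub_one_mul_sum_range_natCast_mul_pow {R : Type*} [CommRing R] (x : R) (n : ℕ) :
    (x - 1) * ∑ m ∈ range n, (m : R) * x ^ m = n * x ^ n - x * ∑ m ∈ range n, x ^ m := by
  induction n with
  | zero => simp
  | succ n ih =>
    rw [sum_range_succ, sum_range_succ, mul_add, ih]
    push_cast
    ring

theorem sum_range_natCast_mul_pow_of_pow_eq_one {K : Type*} [Field K] {ω : K} {N : ℕ}
    (hωN : ω ^ N = 1) (hω : ω ≠ 1) :
    ∑ m ∈ range N, (m : K) * ω ^ m = N / (ω - 1) := by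
  rw [eq_div_iff (sub_ne_zero.mpr hω), mul_comm, sub_one_mul_sum_range_natCast_mul_pow, hωN,
    geom_sum_eq hω, hωN, sub_self, zero_div, mul_zero, sub_zero, mul_one]

theorem add_sum_Icc_one_sub_one {M : Type*} [AddCommMonoid M] (f : ℕ → M) {N : ℕ} (hN : N ≠ 0) :
    f 0 + ∑ m ∈ Icc 1 (N - 1), f m = ∑ m ∈ range N, f m := by
  rw [Icc_sub_one_right_eq_Ico_of_not_isMin (by simpa using hN),
    sum_range_eq_add_Ico f (Nat.pos_of_ne_zero hN)]

theorem sum_Icc_div_sub_half_mul_pow_of_pow_eq_one {K : Type*} [Field K] [CharZero K]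
    {N : ℕ} (hN : N ≠ 0) {ω : K} (hωN : ω ^ N = 1) (hω : ω ≠ 1) :
    ∑ m ∈ Icc 1 (N - 1), ((m : K) / N - 1 / 2) * ω ^ m = (ω + 1) / (2 * (ω - 1)) := by
  have hω' : ω - 1 ≠ 0 := sub_ne_zero.mpr hω
  have hN' : (N : K) ≠ 0 := Nat.cast_ne_zero.mpr hN
  have hrange : ∑ m ∈ range N, ((m : K) / N - 1 / 2) * ω ^ m = 1 / (ω - 1) := by
    simp only [sub_mul, div_mul_eq_mul_div, sum_sub_distrib, ← sum_div,
      sum_range_natCast_mul_pow_of_pow_eq_one hωN hω, ← mul_sum, geom_sum_eq hω, hωN]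
    field_simp
    ring
  have hsum := add_sum_Icc_one_sub_one (fun m => ((m : K) / N - 1 / 2) * ω ^ m) hN
  rw [hrange] at hsum
  rw [eq_sub_of_add_eq' hsum]
  field_simp
  ring

theorem sum_Icc_div_sub_half {K : Type*} [Field K] [CharZero K] {N : ℕ} (hN : N ≠ 0) :
    ∑ m ∈ Icc 1 (N - 1), ((m : K) / N - 1 / 2) = 0 := by
  have hgauss := congrArg (Nat.cast : ℕ → K) (sum_range_id_mul_two N)
  push_cast [Nat.cast_sub (Nat.one_le_iff_ne_zero.mpr hN)] at hgauss
  have hrange : ∑ m ∈ range N, ((m : K) / N - 1 / 2) = -1 / 2 := by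
    rw [sum_sub_distrib, ← sum_div, sum_const, card_range, nsmul_eq_mul]
    field_simp
    linear_combination hgauss
  have hsum := add_sum_Icc_one_sub_one (fun m => ((m : K) / N - 1 / 2)) hN
  rw [eq_sub_of_add_eq' hsum, hrange]
  norm_num

theorem Complex.exp_add_one_div_exp_sub_one (z : ℂ) :
    (Complex.exp (2 * Complex.I * z) + 1) / (2 * (Complex.exp (2 * Complex.I * z) - 1))
      = -(Complex.I / 2) * Complex.cot z := by
  rw [Complex.cot_eq_exp_ratio, ← neg_sub 1, mul_neg]
  field_simp

theorem Int.fract_intCast_div_natCast_eq_val {K : Type*} [Field K] [LinearOrder K]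
    [IsStrictOrderedRing K] [FloorRing K] {N : ℕ} [NeZero N] (z : ℤ) :
    Int.fract ((z : K) / N) = ((z : ZMod N).val : K) / N := by
  rw [Int.fract_div_intCast_eq_div_intCast_mod, ← ZMod.val_intCast, Int.cast_natCast]

theorem ZMod.sum_Icc_unit_mul_natCast {M : Type*} [AddCommMonoid M] {N : ℕ} [NeZero N]
    (u : (ZMod N)ˣ) (g : ZMod N → M) :
    ∑ k ∈ Icc 1 (N - 1), g (u * k) = ∑ k ∈ Icc 1 (N - 1), g k := by
  have hmem : ∀ j : ZMod N, j ≠ 0 → j.val ∈ Icc 1 (N - 1) := fun j hj => by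
    have := (ZMod.val_ne_zero j).mpr hj
    have := ZMod.val_lt j
    simp only [mem_Icc]; omega
  have hval : ∀ k ∈ Icc 1 (N - 1), (k : ZMod N).val = k := fun k hk => by
    simp only [mem_Icc] at hk
    exact ZMod.val_natCast_of_lt (by omega)
  have hne : ∀ k ∈ Icc 1 (N - 1), (k : ZMod N) ≠ 0 := fun k hk h => by
    have := hval k hk
    simp only [mem_Icc, h, ZMod.val_zero] at hk this
    omega
  refine sum_nbij' (fun k => ((u : ZMod N) * k).val)
    (fun m => ((u⁻¹ : (ZMod N)ˣ) * m : ZMod N).val)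
    (fun k hk => hmem _ (by simpa using hne k hk)) (fun m hm => hmem _ (by simpa using hne m hm))
    (fun k hk => ?_) (fun m hm => ?_) (fun _ _ => by simp only [ZMod.natCast_zmod_val])
  · simp [hval k hk]
  · simp [hval m hm]

theorem ZMod.sum_Icc_val_div_sub_half_mul_stdAddChar {N : ℕ} [NeZero N] (u : (ZMod N)ˣ)
    (m : ℕ) :
    ∑ k ∈ Icc 1 (N - 1), ((((u : ZMod N) * k).val : ℂ) / N - 1 / 2)
        * ZMod.stdAddChar ((m : ZMod N) * ((u : ZMod N) * (k : ZMod N)))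
      = if N ∣ m then 0 else -(Complex.I / 2) * (Real.cot (π * m / N) : ℂ) := by
  have hN : N ≠ 0 := NeZero.ne N
  set ω := ZMod.stdAddChar (m : ZMod N)
  have hterm : ∀ k ∈ Icc 1 (N - 1),
      (((k : ZMod N).val : ℂ) / N - 1 / 2) * ZMod.stdAddChar ((m : ZMod N) * (k : ZMod N))
        = ((k : ℂ) / N - 1 / 2) * ω ^ k := fun k hk => by
    rw [ZMod.val_natCast_of_lt (by simp only [mem_Icc] at hk; omega), mul_comm (m : ZMod N),
      ← nsmul_eq_mul, AddChar.map_nsmul_eq_pow]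
  rw [ZMod.sum_Icc_unit_mul_natCast u
    (fun j => ((j.val : ℂ) / N - 1 / 2) * ZMod.stdAddChar ((m : ZMod N) * j)), sum_congr rfl hterm]
  split_ifs with hm
  · simpa [ω, (ZMod.natCast_eq_zero_iff m N).mpr hm] using sum_Icc_div_sub_half (K := ℂ) hN
  have hωN : ω ^ N = 1 := by
    rw [← AddChar.map_nsmul_eq_pow, nsmul_eq_mul, ZMod.natCast_self, zero_mul,
      AddChar.map_zero_eq_one]
  have hω : ω ≠ 1 := by
    rwa [← AddChar.map_zero_eq_one (ZMod.stdAddChar (N := N)), ZMod.injective_stdAddChar.ne_iff,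
      ne_eq, ZMod.natCast_eq_zero_iff]
  have hωexp : ω = Complex.exp (2 * Complex.I * (π * m / N : ℝ)) := by
    have h := ZMod.stdAddChar_coe (N := N) m
    push_cast at h
    rw [show ω = _ from h]
    push_cast
    ring_nf
  rw [sum_Icc_div_sub_half_mul_pow_of_pow_eq_one hN hωN hω, hωexp,
    Complex.exp_add_one_div_exp_sub_one, Complex.ofReal_cot]

theorem sum_sum_mul_mul_cos_sub_eq_norm_sq {ι : Type*} (s : Finset ι) (a θ : ι → ℝ) :
    ∑ k ∈ s, ∑ l ∈ s, a k * a l * Real.cos (θ k - θ l)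
      = ‖∑ k ∈ s, (a k : ℂ) * Complex.exp (θ k * Complex.I)‖ ^ 2 := by
  rw [Complex.sq_norm, ← Complex.ofReal_re (Complex.normSq _), ← Complex.mul_conj, map_sum,
    sum_mul_sum, Complex.re_sum]
  refine sum_congr rfl fun k _ => ?_
  rw [Complex.re_sum]
  refine sum_congr rfl fun l _ => ?_
  rw [map_mul, Complex.conj_ofReal, ← Complex.exp_conj, map_mul, Complex.conj_ofReal,
    Complex.conj_I, mul_mul_mul_comm, ← Complex.exp_add,
    show (θ k : ℂ) * Complex.I + θ l * -Complex.I = (θ k - θ l : ℝ) * Complex.I by push_cast; ring,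
    ← Complex.ofReal_mul, Complex.re_ofReal_mul, Complex.exp_ofReal_mul_I_re]

theorem Real.cos_two_pi_mul_natCast_mul_fract (n : ℕ) (x : ℝ) :
    Real.cos (2 * π * n * Int.fract x) = Real.cos (2 * π * n * x) := by
  conv_rhs => rw [← Real.cos_sub_int_mul_two_pi _ (n * ⌊x⌋)]
  rw [← Int.self_sub_floor]
  push_cast
  ring_nf

theorem hasSum_one_div_nat_sq_mul_cos {x : ℝ} (hx : x ∈ Set.Icc (0 : ℝ) 1) :
    HasSum (fun n : ℕ => 1 / (n : ℝ) ^ 2 * Real.cos (2 * π * n * x))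
      (π ^ 2 * (x ^ 2 - x + 1 / 6)) := by
  have hB : (Polynomial.map (algebraMap ℚ ℝ) (Polynomial.bernoulli 2)).eval x
      = x ^ 2 - x + 1 / 6 := by
    simp [Polynomial.bernoulli, Finset.sum_range_succ, bernoulli, bernoulli'_two]
    ring
  convert hasSum_one_div_nat_pow_mul_cos one_ne_zero hx using 1
  · simp
  rw [mul_one, hB, Nat.factorial_two]
  push_cast
  ring

theorem norm_sq_sum_fract_sub_half_mul_exp {N : ℕ} [NeZero N] {z₁ z₂ : ℤ} {w : ℕ}
    (hz₁ : IsUnit (z₁ : ZMod N)) (hw : N.Coprime w) (hwz : (w : ZMod N) * z₁ = z₂) (n : ℕ) :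
    ‖∑ k ∈ Icc 1 (N - 1), ((Int.fract ((z₁ : ℝ) * k / N) - 1 / 2 : ℝ) : ℂ)
        * Complex.exp ((2 * π * n * z₂ * k / N : ℝ) * Complex.I)‖ ^ 2
      = if N ∣ n then 0 else Real.cot (π * n * w / N) ^ 2 / 4 := by
  have hterm : ∀ k ∈ Icc 1 (N - 1),
      ((Int.fract ((z₁ : ℝ) * k / N) - 1 / 2 : ℝ) : ℂ)
          * Complex.exp ((2 * π * n * z₂ * k / N : ℝ) * Complex.I)
        = ((((hz₁.unit : ZMod N) * (k : ZMod N)).val : ℂ) / N - 1 / 2)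
          * ZMod.stdAddChar (((n * w : ℕ) : ZMod N) * ((hz₁.unit : ZMod N) * (k : ZMod N))) :=
      fun k _ => by
    have hfract : Int.fract ((z₁ : ℝ) * k / N) = (((z₁ * k : ℤ) : ZMod N).val : ℝ) / N := by
      rw [← Int.fract_intCast_div_natCast_eq_val]
      push_cast
      rfl
    have hexp : Complex.exp ((2 * π * n * z₂ * k / N : ℝ) * Complex.I)
        = ZMod.stdAddChar ((n * z₂ * k : ℤ) : ZMod N) := by
      rw [ZMod.stdAddChar_coe]
      push_cast
      ring_nf
    rw [hfract, hexp, IsUnit.unit_spec]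
    push_cast
    rw [← hwz]
    ring_nf
  rw [sum_congr rfl hterm, ZMod.sum_Icc_val_div_sub_half_mul_stdAddChar]
  simp only [hw.dvd_mul_right]
  split_ifs
  · simp
  · rw [norm_mul, norm_neg, norm_div, Complex.norm_I, Complex.norm_real, Real.norm_eq_abs,
      Complex.norm_two, mul_pow, sq_abs]
    push_cast
    ring_nf

theorem sum_sum_fract_mul_one_div_sq_mul_cos {N : ℕ} [NeZero N] {z₁ z₂ : ℤ} {w : ℕ}
    (hz₁ : IsUnit (z₁ : ZMod N)) (hw : N.Coprime w) (hwz : (w : ZMod N) * z₁ = z₂) (n : ℕ) :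
    ∑ k ∈ Icc 1 (N - 1), ∑ l ∈ Icc 1 (N - 1),
        (Int.fract ((z₁ : ℝ) * k / N) - 1 / 2) * (Int.fract ((z₁ : ℝ) * l / N) - 1 / 2) *
          (1 / (n : ℝ) ^ 2 *
            Real.cos (2 * π * n * Int.fract (((z₂ * ((k : ℤ) - (l : ℤ)) : ℤ) : ℝ) / N)))
      = 1 / 4 * if 1 ≤ n ∧ ¬ N ∣ n then Real.cot (π * n * w / N) ^ 2 / (n : ℝ) ^ 2 else 0 := by
  set a : ℕ → ℝ := fun k => Int.fract ((z₁ : ℝ) * k / N) - 1 / 2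
  set θ : ℕ → ℝ := fun k => 2 * π * n * z₂ * k / N
  have hcos : ∀ k l : ℕ,
      Real.cos (2 * π * n * Int.fract (((z₂ * ((k : ℤ) - (l : ℤ)) : ℤ) : ℝ) / N))
        = Real.cos (θ k - θ l) := fun k l => by
    rw [Real.cos_two_pi_mul_natCast_mul_fract]
    congr 1
    push_cast
    ring
  calc _ = 1 / (n : ℝ) ^ 2 * ∑ k ∈ Icc 1 (N - 1), ∑ l ∈ Icc 1 (N - 1),
          a k * a l * Real.cos (θ k - θ l) := by
        rw [mul_sum]
        refine sum_congr rfl fun k _ => ?_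
        rw [mul_sum]
        refine sum_congr rfl fun l _ => ?_
        rw [hcos]
        ring
    _ = 1 / (n : ℝ) ^ 2 * (if N ∣ n then 0 else Real.cot (π * n * w / N) ^ 2 / 4) := by
        rw [sum_sum_mul_mul_cos_sub_eq_norm_sq, norm_sq_sum_fract_sub_half_mul_exp hz₁ hw hwz]
    _ = _ := by
        rcases Nat.eq_zero_or_pos n with rfl | hn
        · simp
        split_ifs <;> first | omega | ring

theorem stmt5_general (N : ℕ) (hN : 3 ≤ N) (z₁ z₂ : ℤ)
    (h₁ : Int.gcd z₁ N = 1) (h₂ : Int.gcd z₂ N = 1)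
    (w : ℕ)
    (hwz : (w : ℤ) * z₁ ≡ z₂ [ZMOD (N : ℤ)]) :
    Summable (fun h : ℕ => if 1 ≤ h ∧ ¬ (N ∣ h) then
        Real.cot (π * h * w / N) ^ 2 / (h : ℝ) ^ 2 else 0) ∧
    ∑ k ∈ Finset.Icc 1 (N - 1), ∑ l ∈ Finset.Icc 1 (N - 1),
        (Int.fract ((z₁ : ℝ) * k / N) - 1 / 2) *
          (Int.fract ((z₁ : ℝ) * l / N) - 1 / 2) *
          (Int.fract (((z₂ * ((k : ℤ) - (l : ℤ)) : ℤ) : ℝ) / N) ^ 2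
            - Int.fract (((z₂ * ((k : ℤ) - (l : ℤ)) : ℤ) : ℝ) / N) + 1 / 6)
      = (1 / (4 * π ^ 2)) * ∑' h : ℕ, if 1 ≤ h ∧ ¬ (N ∣ h) then
          Real.cot (π * h * w / N) ^ 2 / (h : ℝ) ^ 2 else 0 := by
  have : NeZero N := ⟨by omega⟩
  have hunit : ∀ z : ℤ, Int.gcd z N = 1 → IsUnit (z : ZMod N) := fun z hz =>
    (ZMod.coe_int_isUnit_iff_isCoprime z N).mpr
      (Int.isCoprime_iff_gcd_eq_one.mpr (by rwa [Int.gcd_comm]))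
  have hwz' : (w : ZMod N) * z₁ = z₂ := by
    exact_mod_cast (ZMod.intCast_eq_intCast_iff _ _ _).mpr hwz
  have hw : N.Coprime w := ((ZMod.isUnit_iff_coprime w N).mp
    (isUnit_of_mul_isUnit_left (hwz' ▸ hunit z₂ h₂))).symm
  have hB₂ := hasSum_sum fun k (_ : k ∈ Icc 1 (N - 1)) =>
    hasSum_sum fun l (_ : l ∈ Icc 1 (N - 1)) =>
    (hasSum_one_div_nat_sq_mul_cos (x := Int.fract (((z₂ * ((k : ℤ) - (l : ℤ)) : ℤ) : ℝ) / N))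
      ⟨Int.fract_nonneg _, (Int.fract_lt_one _).le⟩).mul_left
      ((Int.fract ((z₁ : ℝ) * k / N) - 1 / 2) * (Int.fract ((z₁ : ℝ) * l / N) - 1 / 2))
  simp only [sum_sum_fract_mul_one_div_sq_mul_cos (hunit z₁ h₁) hw hwz'] at hB₂
  refine ⟨(summable_mul_left_iff (by norm_num : (1 / 4 : ℝ) ≠ 0)).mp hB₂.summable, ?_⟩
  have htsum := hB₂.tsum_eq
  simp only [tsum_mul_left, mul_left_comm _ (π ^ 2), ← mul_sum] at htsum
  rw [one_div_mul_eq_div, eq_div_iff (by positivity)]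
  linear_combination (-4) * htsum

/-- Let `N ≥ 3`, `z₁, z₂ ∈ ℤ` with `gcd(z₁,N) = gcd(z₂,N) = 1`, and let
`w ∈ {1,…,N−1}` satisfy `w z₁ ≡ z₂ (mod N)`. Then
`∑_{k,ℓ=1}^{N−1} B₁({z₁k/N}) B₁({z₁ℓ/N}) B₂({z₂(k−ℓ)/N})
  = (1/(4π²)) ∑_{h ≥ 1, N ∤ h} cot²(πhw/N)/h²`,
where the right-hand series (over positive integers `h` not divisible by `N`) converges. -/
theorem stmt5 (N : ℕ) (hN : 3 ≤ N) (z₁ z₂ : ℤ)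
    (h₁ : Int.gcd z₁ N = 1) (h₂ : Int.gcd z₂ N = 1)
    (w : ℕ) (hw1 : 1 ≤ w) (hw2 : w ≤ N - 1)
    (hwz : (w : ℤ) * z₁ ≡ z₂ [ZMOD (N : ℤ)]) :
    Summable (fun h : ℕ => if 1 ≤ h ∧ ¬ (N ∣ h) then
        Real.cot (π * h * w / N) ^ 2 / (h : ℝ) ^ 2 else 0) ∧
    ∑ k ∈ Finset.Icc 1 (N - 1), ∑ l ∈ Finset.Icc 1 (N - 1),
        (Int.fract ((z₁ : ℝ) * k / N) - 1 / 2) *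
          (Int.fract ((z₁ : ℝ) * l / N) - 1 / 2) *
          (Int.fract (((z₂ * ((k : ℤ) - (l : ℤ)) : ℤ) : ℝ) / N) ^ 2
            - Int.fract (((z₂ * ((k : ℤ) - (l : ℤ)) : ℤ) : ℝ) / N) + 1 / 6)
      = (1 / (4 * π ^ 2)) * ∑' h : ℕ, if 1 ≤ h ∧ ¬ (N ∣ h) then
          Real.cot (π * h * w / N) ^ 2 / (h : ℝ) ^ 2 else 0 :=
  stmt5_general N hN z₁ z₂ h₁ h₂ w hwz
end

section
/- Let N ≥ 3 and let w ∈ ℤ with gcd(w, N) = 1. Then (1/N²) ∑_{h=1}^{N−1} cot²(π h w/N)/h² > 1/(6N²); equivalently ∑_{h=1}^{N−1} cot²(π h w/N)/h² > 1/6. -/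
/-!
Choose `h` with `h * w ≡ 1 (mod N)`. Then `N - h` satisfies `(N - h) * w ≡ -1`, the two indices
are distinct because `N ∤ 2`, and both terms carry `cot² (π / N)`. Since `cot x ≥ 1 / (2x)` for
`0 < x ≤ π / 3` and `1/a² + 1/b² ≥ 8/(a + b)²`, these two terms alone contribute at least
`(N / 2π)² · 8 / N² = 2 / π² > 1 / 6`.
-/

open Real

namespace Real

theorem cot_periodic : Function.Periodic cot π := fun x => by
  rw [← inv_inv (cot _), cot_inv_eq_tan, tan_periodic x, ← cot_inv_eq_tan, inv_inv]

theorem cot_neg (x : ℝ) : cot (-x) = -cot x := by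
  rw [← inv_inv (cot _), cot_inv_eq_tan, tan_neg, ← cot_inv_eq_tan, inv_neg, inv_inv]

theorem cot_pi_mul_div_eq_of_modEq {N : ℕ} {a b : ℤ} (h : a ≡ b [ZMOD N]) :
    cot (π * a / N) = cot (π * b / N) := by
  rcases eq_or_ne N 0 with rfl | hN
  · simp
  obtain ⟨k, hk⟩ := Int.modEq_iff_dvd.mp h.symm
  have hab : (a : ℝ) = b + N * k := by exact_mod_cast (by linarith : a = b + N * k)
  have : π * a / N = π * b / N + k * π := by
    rw [hab]
    field_simp
  rw [this, cot_periodic.int_mul k]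

theorem cot_pi_mul_natCast_mul_div_eq_of_modEq {N m : ℕ} {w c : ℤ}
    (h : (m : ℤ) * w ≡ c [ZMOD N]) : cot (π * m * w / N) = cot (π * c / N) := by
  rw [← cot_pi_mul_div_eq_of_modEq h]
  push_cast
  ring_nf

theorem inv_two_mul_le_cot {x : ℝ} (hx₀ : 0 < x) (hx : x ≤ π / 3) : (2 * x)⁻¹ ≤ cot x := by
  have hsin : 0 < sin x := sin_pos_of_pos_of_lt_pi hx₀ (by linarith [pi_pos])
  have hcos : 1 / 2 ≤ cos x := by
    rw [← cos_pi_div_three]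
    exact cos_le_cos_of_nonneg_of_le_pi hx₀.le (by linarith [pi_pos]) hx
  calc (2 * x)⁻¹ = (1 / 2) / x := by field_simp
    _ ≤ cos x / sin x := div_le_div₀ (by linarith) hcos hsin (sin_le hx₀.le)
    _ = cot x := (cot_eq_cos_div_sin x).symm

end Real

theorem eight_div_sq_add_le_inv_sq_add_inv_sq {a b : ℝ} (ha : 0 < a) (hb : 0 < b) :
    8 / (a + b) ^ 2 ≤ 1 / a ^ 2 + 1 / b ^ 2 := by
  rw [div_add_div _ _ (by positivity) (by positivity),
    div_le_div_iff₀ (by positivity) (by positivity)]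
  nlinarith [mul_nonneg (sq_nonneg (a - b)) (by positivity : 0 ≤ a ^ 2 + 4 * (a * b) + b ^ 2)]

theorem two_div_pi_sq_le_cot_sq_mul {a b : ℝ} (ha : 0 < a) (hb : 0 < b) (hab : 3 ≤ a + b) :
    2 / π ^ 2 ≤ cot (π / (a + b)) ^ 2 * (1 / a ^ 2 + 1 / b ^ 2) := by
  have hcot : (2 * (π / (a + b)))⁻¹ ≤ cot (π / (a + b)) :=
    inv_two_mul_le_cot (by positivity) (div_le_div_of_nonneg_left pi_pos.le (by norm_num) hab)
  calc 2 / π ^ 2 = (2 * (π / (a + b)))⁻¹ ^ 2 * (8 / (a + b) ^ 2) := by field_simp; ring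
    _ ≤ cot (π / (a + b)) ^ 2 * (1 / a ^ 2 + 1 / b ^ 2) := by
      gcongr
      exact eight_div_sq_add_le_inv_sq_add_inv_sq ha hb

theorem one_div_six_lt_two_div_pi_sq : 1 / 6 < 2 / π ^ 2 := by
  rw [div_lt_div_iff₀ (by norm_num) (by positivity)]
  nlinarith [pi_lt_d2, pi_pos]

theorem exists_mem_Icc_mul_modEq_one {N : ℕ} (hN : 2 ≤ N) {w : ℤ} (hw : Int.gcd w N = 1) :
    ∃ h ∈ Finset.Icc 1 (N - 1), (h : ℤ) * w ≡ 1 [ZMOD N] := by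
  obtain ⟨u, v, huv⟩ := Int.isCoprime_iff_gcd_eq_one.mpr hw
  have hN' : (0 : ℤ) < N := by omega
  have hu : u % N * w ≡ 1 [ZMOD N] :=
    calc u % N * w ≡ u * w [ZMOD N] := (Int.mod_modEq u N).mul_right w
      _ = 1 + N * (-v) := by linarith
      _ ≡ 1 [ZMOD N] := Int.modEq_add_fac_self
  have hu₀ : u % N ≠ 0 := by
    intro h0
    rw [h0, zero_mul] at hu
    have := Int.le_of_dvd one_pos (Int.modEq_iff_dvd.mp hu)
    omega
  refine ⟨(u % N).toNat, ?_, ?_⟩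
  · have := Int.emod_lt_of_pos u hN'
    have := Int.emod_nonneg u hN'.ne'
    simp only [Finset.mem_Icc]
    omega
  · rwa [Int.toNat_of_nonneg (Int.emod_nonneg u hN'.ne')]

theorem natCast_sub_mul_modEq_neg_one {N h : ℕ} (hle : h ≤ N) {w : ℤ}
    (hh : (h : ℤ) * w ≡ 1 [ZMOD N]) : ((N - h : ℕ) : ℤ) * w ≡ -1 [ZMOD N] := by
  simpa [Nat.cast_sub hle, sub_mul] using
    (Int.modEq_zero_iff_dvd.mpr (dvd_mul_right (N : ℤ) w)).sub hh

theorem cot_sq_pi_div_mul_le_sum_Icc {N h : ℕ} (hN : 3 ≤ N) (hmem : h ∈ Finset.Icc 1 (N - 1))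
    {w : ℤ} (hh : (h : ℤ) * w ≡ 1 [ZMOD N]) :
    cot (π / N) ^ 2 * (1 / (h : ℝ) ^ 2 + 1 / ((N - h : ℕ) : ℝ) ^ 2) ≤
      ∑ i ∈ Finset.Icc 1 (N - 1), cot (π * i * w / N) ^ 2 / (i : ℝ) ^ 2 := by
  rw [Finset.mem_Icc] at hmem
  have hh' := natCast_sub_mul_modEq_neg_one (by omega) hh
  have hne : h ≠ N - h := fun heq => by
    rw [← heq] at hh'
    have := Int.le_of_dvd two_pos (by simpa using Int.modEq_iff_dvd.mp (hh.symm.trans hh'))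
    omega
  calc cot (π / N) ^ 2 * (1 / (h : ℝ) ^ 2 + 1 / ((N - h : ℕ) : ℝ) ^ 2)
      = ∑ i ∈ {h, N - h}, cot (π * i * w / N) ^ 2 / (i : ℝ) ^ 2 := by
        rw [Finset.sum_pair hne, cot_pi_mul_natCast_mul_div_eq_of_modEq hh,
          cot_pi_mul_natCast_mul_div_eq_of_modEq hh']
        simp only [Int.cast_one, Int.cast_neg, mul_one, mul_neg, neg_div, cot_neg, neg_sq]
        ring
    _ ≤ _ := Finset.sum_le_sum_of_subset_of_nonneg
        (Finset.insert_subset (Finset.mem_Icc.mpr hmem)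
          (Finset.singleton_subset_iff.mpr (Finset.mem_Icc.mpr (by omega))))
        (fun _ _ _ => by positivity)

/-- Let `N ≥ 3` and `w ∈ ℤ` with `gcd(w, N) = 1`. Then
`(1/N²) ∑_{h=1}^{N−1} cot²(πhw/N)/h² > 1/(6N²)`; equivalently
`∑_{h=1}^{N−1} cot²(πhw/N)/h² > 1/6`. -/
theorem stmt11 (N : ℕ) (hN : 3 ≤ N) (w : ℤ) (hw : Int.gcd w N = 1) :
    (1 / (N : ℝ) ^ 2) * ∑ h ∈ Finset.Icc 1 (N - 1),
        Real.cot (π * h * w / N) ^ 2 / (h : ℝ) ^ 2 > 1 / (6 * (N : ℝ) ^ 2) ∧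
    ∑ h ∈ Finset.Icc 1 (N - 1),
        Real.cot (π * h * w / N) ^ 2 / (h : ℝ) ^ 2 > 1 / 6 := by
  obtain ⟨h, hmem, hh⟩ := exists_mem_Icc_mul_modEq_one (by omega) hw
  have hhN := Finset.mem_Icc.mp hmem
  have hS : 1 / 6 < ∑ h ∈ Finset.Icc 1 (N - 1), cot (π * h * w / N) ^ 2 / (h : ℝ) ^ 2 :=
    calc (1 : ℝ) / 6 < 2 / π ^ 2 := one_div_six_lt_two_div_pi_sq
      _ ≤ cot (π / N) ^ 2 * (1 / (h : ℝ) ^ 2 + 1 / ((N - h : ℕ) : ℝ) ^ 2) := by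
        have := two_div_pi_sq_le_cot_sq_mul (a := h) (b := (N - h : ℕ))
          (by exact_mod_cast hhN.1) (by exact_mod_cast (by omega : 0 < N - h))
          (by exact_mod_cast (by omega : 3 ≤ h + (N - h)))
        rwa [← Nat.cast_add, Nat.add_sub_cancel' (by omega)] at this
      _ ≤ _ := cot_sq_pi_div_mul_le_sum_Icc hN hmem hh
  refine ⟨?_, hS⟩
  calc 1 / (6 * (N : ℝ) ^ 2) = 1 / (N : ℝ) ^ 2 * (1 / 6) := by ring
    _ < _ := mul_lt_mul_of_pos_left hS (by positivity)
end

section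
/- For every integer N ≥ 3, (1/(N−1)) ∑_{w=1}^{N−1} |cot(π w/N)| < (3/π) log(3N). -/
/-!
On `(0, π)` we have `cot x ≤ 1/x` (as `tan x > x` below `π/2`, and `cot x ≤ 0` beyond), and
`cot (π - x) = -cot x`, so `|cot x| ≤ 1/x + 1/(π - x)`. At `x = πw/N` both terms sum over `w` to
`(N/π) H_{N-1}`, giving `∑ |cot (πw/N)| ≤ (2N/π)(1 + log (N - 1))`. For `N ≥ 3`,
`2N ≤ 3(N - 1)` and `1 + log (N - 1) < log (3(N - 1)) < log (3N)`.
-/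

open Real Finset

namespace Real

lemma cot_le_inv {x : ℝ} (hx₀ : 0 < x) (hxπ : x < π) : cot x ≤ x⁻¹ := by
  rcases lt_or_ge x (π / 2) with hx | hx
  · rw [← tan_inv_eq_cot]
    exact inv_anti₀ hx₀ (lt_tan hx₀ hx).le
  · have hcos : cos x ≤ 0 := cos_nonpos_of_pi_div_two_le_of_le hx (by linarith)
    rw [cot_eq_cos_div_sin]
    exact (div_nonpos_of_nonpos_of_nonneg hcos (sin_pos_of_pos_of_lt_pi hx₀ hxπ).le).trans
      (inv_pos.2 hx₀).le

lemma cot_pi_sub (x : ℝ) : cot (π - x) = -cot x := by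
  rw [cot_eq_cos_div_sin, cot_eq_cos_div_sin, cos_pi_sub, sin_pi_sub, neg_div]

lemma abs_cot_le_inv_add_inv_pi_sub {x : ℝ} (hx₀ : 0 < x) (hxπ : x < π) :
    |cot x| ≤ x⁻¹ + (π - x)⁻¹ := by
  have hle := cot_le_inv hx₀ hxπ
  have hge := cot_le_inv (x := π - x) (by linarith) (by linarith)
  rw [cot_pi_sub] at hge
  have := inv_pos.2 hx₀
  have := inv_pos.2 (sub_pos.2 hxπ)
  exact abs_le.2 ⟨by linarith, by linarith⟩

lemma abs_cot_pi_mul_div_le {w n : ℝ} (hw : 0 < w) (hwn : w < n) :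
    |cot (π * w / n)| ≤ n / π * (w⁻¹ + (n - w)⁻¹) := by
  have hn : 0 < n := hw.trans hwn
  have hnw : n - w ≠ 0 := (sub_pos.2 hwn).ne'
  have hlt : π * w / n < π := by
    rw [div_lt_iff₀ hn]
    exact mul_lt_mul_of_pos_left hwn pi_pos
  have hsub : π - π * w / n = π * (n - w) / n := by field_simp
  calc |cot (π * w / n)| ≤ (π * w / n)⁻¹ + (π - π * w / n)⁻¹ :=
        abs_cot_le_inv_add_inv_pi_sub (by positivity) hlt
    _ = n / π * (w⁻¹ + (n - w)⁻¹) := by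
        rw [hsub]
        field_simp

end Real

lemma Finset.sum_Icc_one_sub_reflect {M : Type*} [AddCommMonoid M] (f : ℕ → M) (n : ℕ) :
    ∑ w ∈ Icc 1 (n - 1), f (n - w) = ∑ w ∈ Icc 1 (n - 1), f w := by
  refine sum_nbij' (n - ·) (n - ·) ?_ ?_ ?_ ?_ ?_ <;> intro w hw <;> simp only [mem_Icc] at hw ⊢
  all_goals omega

lemma sum_abs_cot_pi_mul_div_le_harmonic (N : ℕ) :
    ∑ w ∈ Icc 1 (N - 1), |cot (π * w / N)| ≤ 2 * N / π * harmonic (N - 1) := by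
  calc ∑ w ∈ Icc 1 (N - 1), |cot (π * w / N)|
      ≤ ∑ w ∈ Icc 1 (N - 1), N / π * ((w : ℝ)⁻¹ + ((N - w : ℕ) : ℝ)⁻¹) := by
        refine sum_le_sum fun w hw => ?_
        rw [mem_Icc] at hw
        rw [Nat.cast_sub (by omega)]
        exact abs_cot_pi_mul_div_le (by exact_mod_cast hw.1) (by exact_mod_cast (by omega : w < N))
    _ = 2 * N / π * harmonic (N - 1) := by
        rw [← mul_sum, sum_add_distrib, sum_Icc_one_sub_reflect (fun w => ((w : ℕ) : ℝ)⁻¹),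
          harmonic_eq_sum_Icc]
        push_cast
        ring

lemma two_mul_one_add_log_sub_one_lt {x : ℝ} (hx : 3 ≤ x) :
    2 * x * (1 + log (x - 1)) < 3 * (x - 1) * log (3 * x) := by
  have hlog3 : 1 < log 3 := by
    rw [lt_log_iff_exp_lt (by norm_num)]
    linarith [exp_one_lt_d9]
  have hlog : log 3 + log (x - 1) < log (3 * x) := by
    rw [← log_mul (by norm_num) (by linarith)]
    exact log_lt_log (by nlinarith) (by linarith)
  have hpos : 0 < 1 + log (x - 1) := by linarith [log_nonneg (by linarith : (1 : ℝ) ≤ x - 1)]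
  calc 2 * x * (1 + log (x - 1)) ≤ 3 * (x - 1) * (1 + log (x - 1)) :=
        mul_le_mul_of_nonneg_right (by linarith) hpos.le
    _ < 3 * (x - 1) * log (3 * x) := by gcongr <;> linarith

/-- For every integer `N ≥ 3`,
`(1/(N−1)) ∑_{w=1}^{N−1} |cot(πw/N)| < (3/π) log(3N)`. -/
theorem stmt14 (N : ℕ) (hN : 3 ≤ N) :
    (1 / ((N : ℝ) - 1)) * ∑ w ∈ Finset.Icc 1 (N - 1), |Real.cot (π * w / N)|
      < (3 / π) * Real.log (3 * N) := by
  have hN' : (3 : ℝ) ≤ N := by exact_mod_cast hN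
  have hharmonic : (harmonic (N - 1) : ℝ) ≤ 1 + log ((N : ℝ) - 1) := by
    simpa [Nat.cast_sub (by omega : 1 ≤ N)] using harmonic_le_one_add_log (N - 1)
  rw [one_div, inv_mul_lt_iff₀ (by linarith)]
  calc ∑ w ∈ Icc 1 (N - 1), |cot (π * w / N)| ≤ 2 * N / π * harmonic (N - 1) :=
        sum_abs_cot_pi_mul_div_le_harmonic N
    _ ≤ 2 * N / π * (1 + log ((N : ℝ) - 1)) := by gcongr
    _ = 2 * N * (1 + log ((N : ℝ) - 1)) / π := by ring
    _ < 3 * ((N : ℝ) - 1) * log (3 * N) / π :=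
        div_lt_div_of_pos_right (two_mul_one_add_log_sub_one_lt hN') pi_pos
    _ = ((N : ℝ) - 1) * (3 / π * log (3 * N)) := by ring
end

section
/- Let F_n denote the Fibonacci numbers (F_0 = 0, F_1 = 1, F_n = F_{n−1} + F_{n−2}), let k ≥ 4, N = F_k, w = F_{k−1}, and let w' ∈ {1,…,N−1} satisfy w w' ≡ 1 (mod N). Then ∑_{h ≥ 1, N ∤ h} cot²(π h w/N)/h² = ∑_{h ≥ 1, N ∤ h} cot²(π h w'/N)/h², where both sums range over positive integers h not divisible by N. Consequently, for the optimal vertex modified Fibonacci lattice rule with generating vector (1, F_{k−1}) and N = F_k points, the mixture term in its squared worst-case error in the two-dimensional unanchored Sobolev space with weights γ₁, γ₂ equals (γ₁γ₂/(4π²N²)) ∑_{h ≥ 1, N ∤ h} cot²(π h w/N)/h². -/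
/-!
Since `F_{k-1}² - F_k F_{k-2} = (-1)^k` (Cassini), `F_{k-1}² ≡ ±1 (mod F_k)`, so the inverse
`w'` of `w = F_{k-1}` modulo `F_k` is `±w`. Then `π h w'/N ≡ ±π h w/N (mod π)`, and `cot²` is
even and `π`-periodic, so the two cotangent sums agree term by term; the two halves of the
mixture term are therefore equal.
-/

open Real

namespace Real

theorem cot_eq_inv_tan (x : ℝ) : cot x = (tan x)⁻¹ := by
  rw [← cot_inv_eq_tan, inv_inv]

theorem cot_add_int_mul_pi (x : ℝ) (n : ℤ) : cot (x + n * π) = cot x := by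
  rw [cot_eq_inv_tan, cot_eq_inv_tan, tan_add_int_mul_pi]

theorem cot_neg_one_pow_mul_sq (j : ℕ) (x : ℝ) : cot ((-1) ^ j * x) ^ 2 = cot x ^ 2 := by
  rcases neg_one_pow_eq_or ℝ j with h | h <;> simp [h, cot_neg]

theorem cot_pi_mul_div_of_modEq {N a b : ℤ} (n : ℤ) (hab : a ≡ b [ZMOD N]) :
    cot (π * n * a / N) = cot (π * n * b / N) := by
  rcases eq_or_ne N 0 with rfl | hN
  · simp
  obtain ⟨m, hm⟩ := Int.modEq_iff_dvd.1 hab.symm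
  have hshift : π * n * a / N = π * n * b / N + (n * m : ℤ) * π := by
    rw [show a = b + N * m by linarith]
    push_cast
    field_simp
  rw [hshift, cot_add_int_mul_pi]

end Real

theorem Int.modEq_mul_of_mul_modEq_one_of_sq_modEq {N w w' ε : ℤ} (hε : ε ^ 2 = 1)
    (hinv : w * w' ≡ 1 [ZMOD N]) (hsq : w ^ 2 ≡ ε [ZMOD N]) : w' ≡ ε * w [ZMOD N] :=
  calc w' = ε ^ 2 * w' := by rw [hε, one_mul]
    _ = ε * (ε * w') := by ring
    _ ≡ ε * (w ^ 2 * w') [ZMOD N] := (hsq.symm.mul_right w').mul_left ε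
    _ = ε * w * (w * w') := by ring
    _ ≡ ε * w * 1 [ZMOD N] := hinv.mul_left _
    _ = ε * w := mul_one _

theorem Nat.fib_add_one_sq_modEq (n : ℕ) :
    (fib (n + 1) : ℤ) ^ 2 ≡ (-1) ^ n [ZMOD fib (n + 2)] := by
  have cassini := Int.fib_succ_mul_fib_pred_sub_fib_sq ((n + 1 : ℕ) : ℤ)
  rw [Int.natAbs_natCast, Nat.cast_add_one, add_sub_cancel_right, add_assoc, one_add_one_eq_two,
    ← Nat.cast_ofNat, ← Nat.cast_add, ← Nat.cast_add_one] at cassini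
  simp only [Int.fib_natCast] at cassini
  refine (Int.modEq_iff_dvd.2 ⟨fib n, ?_⟩).symm
  linear_combination -cassini

theorem Nat.modEq_neg_one_pow_mul_fib_of_mul_modEq_one {n w' : ℕ}
    (hinv : (fib (n + 1) : ℤ) * w' ≡ 1 [ZMOD fib (n + 2)]) :
    (w' : ℤ) ≡ (-1) ^ n * fib (n + 1) [ZMOD fib (n + 2)] :=
  Int.modEq_mul_of_mul_modEq_one_of_sq_modEq (by rw [← pow_mul, pow_mul', neg_one_sq, one_pow])
    hinv (fib_add_one_sq_modEq n)

noncomputable def cotSqSum (N w : ℕ) : ℝ :=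
  ∑' h : ℕ, if 1 ≤ h ∧ ¬ (N ∣ h) then cot (π * h * w / N) ^ 2 / (h : ℝ) ^ 2 else 0

theorem cotSqSum_eq_of_modEq_neg_one_pow_mul {N a b : ℕ} (j : ℕ)
    (hab : (a : ℤ) ≡ (-1) ^ j * b [ZMOD N]) : cotSqSum N a = cotSqSum N b := by
  refine tsum_congr fun h => ?_
  have hterm : cot (π * h * a / N) ^ 2 = cot (π * h * b / N) ^ 2 := by
    have := cot_pi_mul_div_of_modEq (h : ℤ) hab
    push_cast at this
    rw [this, show π * h * ((-1) ^ j * b) / N = (-1) ^ j * (π * h * b / N) by ring,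
      cot_neg_one_pow_mul_sq]
  rw [hterm]

theorem stmt18_general (k : ℕ) (hk : 4 ≤ k) (w' : ℕ)
    (hinv : (Nat.fib (k - 1) : ℤ) * (w' : ℤ) ≡ 1 [ZMOD (Nat.fib k : ℤ)])
    (γ₁ γ₂ : ℝ) :
    ((∑' h : ℕ, if 1 ≤ h ∧ ¬ (Nat.fib k ∣ h) then
        Real.cot (π * h * Nat.fib (k - 1) / Nat.fib k) ^ 2 / (h : ℝ) ^ 2 else 0)
      = ∑' h : ℕ, if 1 ≤ h ∧ ¬ (Nat.fib k ∣ h) then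
          Real.cot (π * h * w' / Nat.fib k) ^ 2 / (h : ℝ) ^ 2 else 0) ∧
    (γ₁ * γ₂ / (8 * π ^ 2 * (Nat.fib k : ℝ) ^ 2)) *
        ((∑' h : ℕ, if 1 ≤ h ∧ ¬ (Nat.fib k ∣ h) then
            Real.cot (π * h * Nat.fib (k - 1) / Nat.fib k) ^ 2 / (h : ℝ) ^ 2 else 0)
          + ∑' h : ℕ, if 1 ≤ h ∧ ¬ (Nat.fib k ∣ h) then
              Real.cot (π * h * w' / Nat.fib k) ^ 2 / (h : ℝ) ^ 2 else 0)
      = (γ₁ * γ₂ / (4 * π ^ 2 * (Nat.fib k : ℝ) ^ 2)) *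
          ∑' h : ℕ, if 1 ≤ h ∧ ¬ (Nat.fib k ∣ h) then
            Real.cot (π * h * Nat.fib (k - 1) / Nat.fib k) ^ 2 / (h : ℝ) ^ 2 else 0 := by
  obtain ⟨n, rfl⟩ : ∃ n, k = n + 2 := ⟨k - 2, by omega⟩
  rw [show n + 2 - 1 = n + 1 from rfl] at hinv ⊢
  have hsum : cotSqSum (Nat.fib (n + 2)) w' = cotSqSum (Nat.fib (n + 2)) (Nat.fib (n + 1)) :=
    cotSqSum_eq_of_modEq_neg_one_pow_mul n (Nat.modEq_neg_one_pow_mul_fib_of_mul_modEq_one hinv)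
  show cotSqSum _ _ = cotSqSum _ _ ∧ _ * (cotSqSum _ _ + cotSqSum _ _) = _ * cotSqSum _ _
  rw [hsum]
  exact ⟨rfl, by ring⟩

/-- Let `F_n` be the Fibonacci numbers, `k ≥ 4`, `N = F_k`, `w = F_{k−1}`,
and `w' ∈ {1,…,N−1}` with `ww' ≡ 1 (mod N)`. Then the cotangent sums for `w` and `w'`
coincide, and consequently the mixture term of the optimal vertex modified Fibonacci
lattice rule in the two-dimensional unanchored Sobolev space with weights `γ₁, γ₂` equals
`(γ₁γ₂/(4π²N²)) ∑_{h ≥ 1, N ∤ h} cot²(πhw/N)/h²`. -/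
theorem stmt18 (k : ℕ) (hk : 4 ≤ k) (w' : ℕ)
    (hw'1 : 1 ≤ w') (hw'2 : w' ≤ Nat.fib k - 1)
    (hinv : (Nat.fib (k - 1) : ℤ) * (w' : ℤ) ≡ 1 [ZMOD (Nat.fib k : ℤ)])
    (γ₁ γ₂ : ℝ) (hγ₁ : 0 < γ₁) (hγ₂ : 0 < γ₂) :
    ((∑' h : ℕ, if 1 ≤ h ∧ ¬ (Nat.fib k ∣ h) then
        Real.cot (π * h * Nat.fib (k - 1) / Nat.fib k) ^ 2 / (h : ℝ) ^ 2 else 0)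
      = ∑' h : ℕ, if 1 ≤ h ∧ ¬ (Nat.fib k ∣ h) then
          Real.cot (π * h * w' / Nat.fib k) ^ 2 / (h : ℝ) ^ 2 else 0) ∧
    (γ₁ * γ₂ / (8 * π ^ 2 * (Nat.fib k : ℝ) ^ 2)) *
        ((∑' h : ℕ, if 1 ≤ h ∧ ¬ (Nat.fib k ∣ h) then
            Real.cot (π * h * Nat.fib (k - 1) / Nat.fib k) ^ 2 / (h : ℝ) ^ 2 else 0)
          + ∑' h : ℕ, if 1 ≤ h ∧ ¬ (Nat.fib k ∣ h) then
              Real.cot (π * h * w' / Nat.fib k) ^ 2 / (h : ℝ) ^ 2 else 0)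
      = (γ₁ * γ₂ / (4 * π ^ 2 * (Nat.fib k : ℝ) ^ 2)) *
          ∑' h : ℕ, if 1 ≤ h ∧ ¬ (Nat.fib k ∣ h) then
            Real.cot (π * h * Nat.fib (k - 1) / Nat.fib k) ^ 2 / (h : ℝ) ^ 2 else 0 :=
  stmt18_general k hk w' hinv γ₁ γ₂
end
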